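/- Let n ≥ 3 be an integer and a > c > 0 reals. Define v^seq(s) = (a-c)²·Σ_{j=1}^{n-s} f_{n,s}(j)/(4(j+1)) for 1 ≤ s ≤ n-1 and v^seq(n) = (a-c)²/4. Then the core of the Stackelberg game (Fin n, v^seq) is empty: there is no x : Fin n → ℝ with Σ_{i} x_i = (a-c)²/4 and Σ_{i∈S} x_i ≥ v^seq(|S|) for every nonempty S ⊆ Fin n. -/

import Mathlib

/-- Stirling number of the second kind (as a real number):
`K m j = (1/j!) · Σ_{i=0}^{j} (-1)^i · C(j,i) · (j-i)^m`. -/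
noncomputable def K (m j : ℕ) : ℝ :=
  (1 / (Nat.factorial j : ℝ)) *
    ∑ i ∈ Finset.range (j + 1), (-1 : ℝ) ^ i * (Nat.choose j i : ℝ) * ((j - i : ℕ) : ℝ) ^ m

/-- Bell number `B m = Σ_{j=1}^{m} K m j`. -/
noncomputable def B (m : ℕ) : ℝ := ∑ j ∈ Finset.Icc 1 m, K m j

/-- Uniform partition distribution: `f n s j = K (n-s) j / B (n-s)`. -/
noncomputable def f (n s j : ℕ) : ℝ := K (n - s) j / B (n - s)

/-- `F n s = Σ_{j=1}^{n-s} j · f n s j / (j+1)`. -/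
noncomputable def F (n s : ℕ) : ℝ :=
  ∑ j ∈ Finset.Icc 1 (n - s), (j : ℝ) * f n s j / ((j : ℝ) + 1)

/-- Value of a coalition of size `s` in the `n`-firm uniform-distribution game:
`v^n(n) = (a-c)²/4`, `v^n(0) = 0`, and for `1 ≤ s ≤ n-1`,
`v^n(s) = (a-c)² · (1-F)/(2-F)² · Σ_{j=1}^{n-s} f n s j / (j+1)`. -/
noncomputable def v (a c : ℝ) (n s : ℕ) : ℝ :=
  if s = n then (a - c) ^ 2 / 4
  else if s = 0 then 0
  else (a - c) ^ 2 * ((1 - F n s) / (2 - F n s) ^ 2) *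
    ∑ j ∈ Finset.Icc 1 (n - s), f n s j / ((j : ℝ) + 1)

/-- Stackelberg value function: `v^seq(n) = (a-c)²/4` and, for `s < n`,
`v^seq(s) = (a-c)² · Σ_{j=1}^{n-s} f n s j / (4(j+1))`. -/
noncomputable def vseq (a c : ℝ) (n s : ℕ) : ℝ :=
  if s = n then (a - c) ^ 2 / 4
  else (a - c) ^ 2 * ∑ j ∈ Finset.Icc 1 (n - s), f n s j / (4 * ((j : ℝ) + 1))

/-!
A single firm leading against the remaining `n - 1` firms, partitioned uniformly at random into
`J` blocks, earns `(a - c)² · 𝔼[1 / (4 (J + 1))]`. Since `J + 1 ≤ n`, with `J = 1` of positive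
probability, this exceeds `(a - c)² / (4 n)`, so the `n` singleton constraints alone demand more
than the monopoly profit. The weights `f n s j` form a probability distribution because the
alternating sums `K m j` satisfy the Stirling recurrence and hence equal `Nat.stirlingSecond m j`.
-/

open Finset

-- `j! · K m j`, the inclusion–exclusion count of surjections from an `m`-set onto a `j`-set.
noncomputable def surjSum (m j : ℕ) : ℝ :=
  ∑ i ∈ range (j + 1), (-1 : ℝ) ^ i * (j.choose i : ℝ) * ((j - i : ℕ) : ℝ) ^ m

lemma K_eq_surjSum_div (m j : ℕ) : K m j = surjSum m j / j.factorial := by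
  rw [K, surjSum, one_div_mul_eq_div]

-- absorption `i · C(t + 1, i) = (t + 1) · C(t, i - 1)`, then shift the index
lemma sum_mul_choose_mul_pow (m t : ℕ) :
    ∑ i ∈ range (t + 2), (-1 : ℝ) ^ i * (i * ((t + 1).choose i : ℝ)) * ((t + 1 - i : ℕ) : ℝ) ^ m
      = -(t + 1) * surjSum m t := by
  rw [sum_range_succ', surjSum, mul_sum]
  simp only [CharP.cast_eq_zero, zero_mul, mul_zero, add_zero]
  refine sum_congr rfl fun k _ => ?_
  have hchoose :
      ((t : ℝ) + 1) * (t.choose k : ℝ) = ((t + 1).choose (k + 1) : ℝ) * ((k : ℝ) + 1) := by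
    exact_mod_cast Nat.add_one_mul_choose_eq t k
  rw [show t + 1 - (k + 1) = t - k by omega, pow_succ]
  push_cast
  linear_combination ((-1 : ℝ) ^ k * ((t - k : ℕ) : ℝ) ^ m) * hchoose

lemma surjSum_succ_succ (m t : ℕ) :
    surjSum (m + 1) (t + 1) = (t + 1) * (surjSum m (t + 1) + surjSum m t) := by
  -- split `(t + 1 - i) ^ (m + 1) = (t + 1) (t + 1 - i) ^ m - i (t + 1 - i) ^ m`
  have hsplit : surjSum (m + 1) (t + 1) = (t + 1) * surjSum m (t + 1) -
      ∑ i ∈ range (t + 2), (-1 : ℝ) ^ i * (i * ((t + 1).choose i : ℝ)) * ((t + 1 - i : ℕ) : ℝ) ^ m := by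
    rw [surjSum, surjSum, mul_sum, ← sum_sub_distrib]
    refine sum_congr rfl fun i hi => ?_
    rw [Nat.cast_sub (Nat.lt_succ_iff.mp (mem_range.mp hi)), pow_succ]
    push_cast
    ring
  rw [hsplit, sum_mul_choose_mul_pow]
  ring

lemma K_succ_succ (m t : ℕ) : K (m + 1) (t + 1) = (t + 1) * K m (t + 1) + K m t := by
  have ht : ((t : ℝ) + 1) ≠ 0 := by positivity
  simp only [K_eq_surjSum_div, surjSum_succ_succ, Nat.factorial_succ, Nat.cast_mul]
  push_cast
  field_simp

lemma K_zero_left (j : ℕ) : K 0 j = if j = 0 then 1 else 0 := by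
  have h := congrArg (Int.cast : ℤ → ℝ) (Int.alternating_sum_range_choose (n := j))
  push_cast at h
  split_ifs with hj <;> simp [K, h, hj]

lemma K_succ_zero (m : ℕ) : K (m + 1) 0 = 0 := by
  simp [K]

lemma K_eq_stirlingSecond (m j : ℕ) : K m j = Nat.stirlingSecond m j := by
  induction m generalizing j with
  | zero => cases j <;> simp [K_zero_left]
  | succ m ih =>
    cases j with
    | zero => simp [K_succ_zero]
    | succ t => rw [K_succ_succ, ih, ih, Nat.stirlingSecond_succ_succ]; push_cast; ring

lemma K_nonneg (m j : ℕ) : 0 ≤ K m j := by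
  rw [K_eq_stirlingSecond]
  positivity

lemma K_one_right {m : ℕ} (hm : m ≠ 0) : K m 1 = 1 := by
  obtain ⟨m, rfl⟩ := Nat.exists_eq_succ_of_ne_zero hm
  rw [K_eq_stirlingSecond, Nat.stirlingSecond_one_right, Nat.cast_one]

lemma one_le_B {m : ℕ} (hm : m ≠ 0) : 1 ≤ B m := by
  rw [← K_one_right hm]
  exact single_le_sum (fun j _ => K_nonneg m j) (mem_Icc.mpr ⟨le_rfl, Nat.one_le_iff_ne_zero.mpr hm⟩)

lemma f_nonneg (n s j : ℕ) : 0 ≤ f n s j :=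
  div_nonneg (K_nonneg _ _) (sum_nonneg fun _ _ => K_nonneg _ _)

lemma f_one_pos {n s : ℕ} (hs : s < n) : 0 < f n s 1 := by
  rw [f, K_one_right (by omega)]
  exact one_div_pos.mpr (one_pos.trans_le (one_le_B (by omega)))

lemma sum_f_eq_one {n s : ℕ} (hs : s < n) : ∑ j ∈ Icc 1 (n - s), f n s j = 1 := by
  simp only [f, ← sum_div]
  exact div_self (one_pos.trans_le (one_le_B (by omega))).ne'

lemma one_div_lt_sum_div_add_one {m : ℕ} (hm : 2 ≤ m) (p : ℕ → ℝ) (hp : ∀ j, 0 ≤ p j)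
    (hp1 : 0 < p 1) (hsum : ∑ j ∈ Icc 1 m, p j = 1) :
    1 / ((m : ℝ) + 1) < ∑ j ∈ Icc 1 m, p j / ((j : ℝ) + 1) := by
  calc 1 / ((m : ℝ) + 1) = ∑ j ∈ Icc 1 m, p j / ((m : ℝ) + 1) := by rw [← sum_div, hsum]
    _ < ∑ j ∈ Icc 1 m, p j / ((j : ℝ) + 1) := by
      refine sum_lt_sum (fun j hj => ?_) ⟨1, mem_Icc.mpr ⟨le_rfl, by omega⟩, ?_⟩
      · have hjm : (j : ℝ) ≤ m := by exact_mod_cast (mem_Icc.mp hj).2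
        gcongr
        exact hp j
      · have hm' : (2 : ℝ) ≤ m := by exact_mod_cast hm
        gcongr
        linarith

lemma vseq_self (a c : ℝ) (n : ℕ) : vseq a c n n = (a - c) ^ 2 / 4 := if_pos rfl

lemma vseq_self_lt_mul_vseq_one {n : ℕ} (hn : 3 ≤ n) {a c : ℝ} (hac : a ≠ c) :
    vseq a c n n < n * vseq a c n 1 := by
  have hpos : 0 < (a - c) ^ 2 := by
    have := sub_ne_zero.mpr hac
    positivity
  have hmean := one_div_lt_sum_div_add_one (m := n - 1) (by omega) (f n 1) (f_nonneg n 1)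
    (f_one_pos (by omega)) (sum_f_eq_one (by omega))
  have hn1 : ((n - 1 : ℕ) : ℝ) + 1 = n := by
    rw [Nat.cast_sub (by omega)]
    ring
  rw [hn1] at hmean
  have hn0 : (0 : ℝ) < n := by positivity
  rw [vseq_self, vseq, if_neg (by omega)]
  calc (a - c) ^ 2 / 4 = n * (a - c) ^ 2 / 4 * (1 / n) := by field_simp
    _ < n * (a - c) ^ 2 / 4 * ∑ j ∈ Icc 1 (n - 1), f n 1 j / ((j : ℝ) + 1) := by gcongr
    _ = n * ((a - c) ^ 2 * ∑ j ∈ Icc 1 (n - 1), f n 1 j / (4 * ((j : ℝ) + 1))) := by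
      rw [mul_sum, mul_sum, mul_sum]
      refine sum_congr rfl fun j _ => ?_
      field_simp

lemma not_exists_core_of_lt_mul_one {n : ℕ} (w : ℕ → ℝ) (h : w n < n * w 1) :
    ¬ ∃ x : Fin n → ℝ, ∑ i, x i = w n ∧
        ∀ S : Finset (Fin n), S.Nonempty → w S.card ≤ ∑ i ∈ S, x i := by
  rintro ⟨x, hsum, hcore⟩
  have hsingle : ∀ i, w 1 ≤ x i := fun i => by simpa using hcore {i} (singleton_nonempty i)
  have := sum_le_sum fun i (_ : i ∈ univ) => hsingle i
  rw [hsum, sum_const, card_univ, Fintype.card_fin, nsmul_eq_mul] at this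
  linarith

theorem stmt18_general (n : ℕ) (hn : 3 ≤ n) (a c : ℝ) (hca : c < a) :
    ¬ ∃ x : Fin n → ℝ, (∑ i, x i = (a - c) ^ 2 / 4) ∧
        ∀ S : Finset (Fin n), S.Nonempty → vseq a c n S.card ≤ ∑ i ∈ S, x i := by
  rw [← vseq_self a c n]
  exact not_exists_core_of_lt_mul_one _ (vseq_self_lt_mul_vseq_one hn hca.ne')

/-- for `n ≥ 3`, the core of the Stackelberg game `(Fin n, v^seq)` is
empty: no allocation of the monopoly profit `(a-c)²/4` gives every nonempty
coalition at least its Stackelberg value. -/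
theorem stmt18 (n : ℕ) (hn : 3 ≤ n) (a c : ℝ) (hc : 0 < c) (hca : c < a) :
    ¬ ∃ x : Fin n → ℝ, (∑ i, x i = (a - c) ^ 2 / 4) ∧
        ∀ S : Finset (Fin n), S.Nonempty → vseq a c n S.card ≤ ∑ i ∈ S, x i :=
  stmt18_general n hn a c hca
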